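/- arXiv:2406.10805 — 7 statements merged into one kernel-verified Lean document; each statement's English description precedes it below -/
import Mathlib

section
/- For every μ > 0, the function g is a probability density function: g(x) ≥ 0 for all real x, and the integral of g over the real line equals 1. -/
open MeasureTheory Real Set

noncomputable def g (μ : ℝ) (x : ℝ) : ℝ :=
  if x < -μ then 0
  else if x < μ then Real.exp (-|x|) * (x / (2 * μ) + 1 / 2)
  else Real.exp (-x)

/-! The density is a skew perturbation of the Laplace density: on `[-μ, μ]` the weights
`x / (2μ) + 1/2` and `-x / (2μ) + 1/2` sum to `1`, and outside it exactly one of `x`, `-x`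
carries the full tail, so `g μ x + g μ (-x) = exp (-|x|)` everywhere. As Lebesgue measure is
invariant under `x ↦ -x`, `2 ∫ g = ∫ exp (-|x|) = 2`. -/

theorem integral_add_comp_neg {G E : Type*} [MeasurableSpace G] [AddGroup G] [MeasurableNeg G]
    [NormedAddCommGroup E] [NormedSpace ℝ E] {μ : Measure G} [μ.IsNegInvariant] {f : G → E}
    (hf : Integrable f μ) : ∫ x, f x + f (-x) ∂μ = (2 : ℝ) • ∫ x, f x ∂μ := by
  rw [integral_add hf hf.comp_neg, integral_neg_eq_self, two_smul]

theorem integral_exp_neg_abs : ∫ x : ℝ, exp (-|x|) = 2 := by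
  rw [integral_comp_abs (f := fun x => exp (-x)), integral_exp_neg_Ioi_zero, mul_one]

theorem integrable_exp_neg_abs : Integrable fun x : ℝ => exp (-|x|) :=
  .of_integral_ne_zero (by rw [integral_exp_neg_abs]; norm_num)

theorem g_nonneg (μ x : ℝ) : 0 ≤ g μ x := by
  unfold g
  split_ifs with hlow hhigh
  · exact le_rfl
  · have hμ : 0 < μ := by linarith
    refine mul_nonneg (exp_pos _).le ?_
    rw [div_add_div _ _ (by positivity) two_ne_zero]
    exact div_nonneg (by linarith) (by positivity)
  · exact (exp_pos _).le

theorem g_of_lt_neg {μ x : ℝ} (hx : x < -μ) : g μ x = 0 := if_pos hx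

theorem g_of_gt {μ x : ℝ} (hμ : 0 < μ) (hx : μ < x) : g μ x = exp (-x) := by
  rw [g, if_neg (by linarith), if_neg (by linarith)]

theorem g_of_mem_Icc {μ x : ℝ} (hμ : 0 < μ) (hx : x ∈ Icc (-μ) μ) :
    g μ x = exp (-|x|) * (x / (2 * μ) + 1 / 2) := by
  rw [g, if_neg (not_lt.2 hx.1)]
  split_ifs with hlt
  · rfl
  · obtain rfl : x = μ := le_antisymm hx.2 (not_lt.1 hlt)
    rw [abs_of_pos hμ]
    field_simp
    ring

theorem g_add_g_neg {μ : ℝ} (hμ : 0 < μ) (x : ℝ) : g μ x + g μ (-x) = exp (-|x|) := by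
  rcases lt_or_ge x (-μ) with hlow | hlow
  · rw [g_of_lt_neg hlow, g_of_gt hμ (by linarith), abs_of_neg (by linarith), zero_add]
  rcases lt_or_ge μ x with hhigh | hhigh
  · rw [g_of_gt hμ hhigh, g_of_lt_neg (by linarith), abs_of_pos (by linarith), add_zero]
  rw [g_of_mem_Icc hμ ⟨hlow, hhigh⟩, g_of_mem_Icc hμ ⟨by linarith, by linarith⟩, abs_neg]
  field_simp
  ring

theorem measurable_g (μ : ℝ) : Measurable (g μ) :=
  Measurable.ite measurableSet_Iio measurable_const
    (Measurable.ite measurableSet_Iio (by fun_prop) (by fun_prop))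

theorem integrable_g {μ : ℝ} (hμ : 0 < μ) : Integrable (g μ) :=
  integrable_exp_neg_abs.mono' (measurable_g μ).aestronglyMeasurable <| .of_forall fun x => by
    rw [Real.norm_of_nonneg (g_nonneg μ x), ← g_add_g_neg hμ x]
    linarith [g_nonneg μ (-x)]

theorem sslud_is_pdf (μ : ℝ) (hμ : 0 < μ) :
    (∀ x : ℝ, 0 ≤ g μ x) ∧ (∫ x : ℝ, g μ x) = 1 := by
  refine ⟨g_nonneg μ, ?_⟩
  have h := integral_add_comp_neg (integrable_g hμ)
  simp only [g_add_g_neg hμ, integral_exp_neg_abs, smul_eq_mul] at h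
  linarith
end

section
/- For every μ > 0 and every real x with -μ ≤ x < 0, the cumulative distribution function satisfies G(x) = (e^{x}/(2μ))(x + μ - 1) + e^{-μ}/(2μ). -/
open MeasureTheory Real

noncomputable def G (μ : ℝ) (x : ℝ) : ℝ := ∫ t in Set.Iic x, g μ t

/-! On `[-μ, 0]` the density is `e^t (t/(2μ) + 1/2)`, which vanishes at `-μ` and has the
antiderivative `e^t ((t - 1)/(2μ) + 1/2)`; below `-μ` the density is zero, so `G` is the
difference of that antiderivative between `-μ` and `x`. -/

theorem hasDerivAt_exp_mul_affine (c d t : ℝ) :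
    HasDerivAt (fun s => exp s * (c * (s - 1) + d)) (exp t * (c * t + d)) t := by
  refine ((hasDerivAt_exp t).fun_mul
    (((hasDerivAt_id' t).sub_const 1).const_mul c |>.add_const d)).congr_deriv ?_
  ring

theorem integral_exp_mul_affine (c d a b : ℝ) :
    ∫ t in a..b, exp t * (c * t + d) = exp b * (c * (b - 1) + d) - exp a * (c * (a - 1) + d) :=
  intervalIntegral.integral_eq_sub_of_hasDerivAt (fun t _ => hasDerivAt_exp_mul_affine c d t)
    ((by fun_prop : Continuous fun t => exp t * (c * t + d)).intervalIntegrable _ _)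

theorem g_of_le_neg {μ t : ℝ} (hμ : 0 < μ) (ht : t ≤ -μ) : g μ t = 0 := by
  rcases ht.lt_or_eq with ht | rfl
  · exact if_pos ht
  · have : -μ < μ := by linarith
    simp only [g, lt_irrefl, this, if_false, if_true]
    field_simp
    ring

theorem g_of_mem_Ioc {μ t : ℝ} (ht : t ∈ Set.Ioc (-μ) 0) :
    g μ t = exp t * ((2 * μ)⁻¹ * t + 1 / 2) := by
  have hlt : t < μ := by linarith [ht.1, ht.2]
  simp [g, not_lt.2 ht.1.le, hlt, abs_of_nonpos ht.2, div_eq_inv_mul]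

theorem G_eq_setIntegral_Ioc {μ x : ℝ} (hμ : 0 < μ) :
    G μ x = ∫ t in Set.Ioc (-μ) x, g μ t := by
  refine setIntegral_eq_of_subset_of_forall_sdiff_eq_zero measurableSet_Iic
    Set.Ioc_subset_Iic_self fun t ht => g_of_le_neg hμ ?_
  by_contra! h
  exact ht.2 ⟨h, ht.1⟩

theorem sslud_cdf_neg (μ : ℝ) (hμ : 0 < μ) (x : ℝ) (h1 : -μ ≤ x) (h2 : x < 0) :
    G μ x = Real.exp x / (2 * μ) * (x + μ - 1) + Real.exp (-μ) / (2 * μ) := by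
  have hg : Set.EqOn (g μ) (fun t => exp t * ((2 * μ)⁻¹ * t + 1 / 2)) (Set.Ioc (-μ) x) :=
    fun t ht => g_of_mem_Ioc ⟨ht.1, ht.2.trans h2.le⟩
  rw [G_eq_setIntegral_Ioc hμ, setIntegral_congr_fun measurableSet_Ioc hg,
    ← intervalIntegral.integral_of_le h1, integral_exp_mul_affine]
  field_simp
  ring
end

section
/- For every μ > 0, the third raw moment of SSLUD(μ) satisfies ∫_{ℝ} x^3 · g(x) dx = 24/μ - e^{-μ}(μ^2 + 6μ + 18 + 24/μ). -/
/-!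
On `[-μ, μ]` pair `x` with `-x`: since `x ^ 3` is odd, the constant `1 / 2` in the density cancels
and only the linear term survives, leaving `(1 / μ) ∫₀^μ x ^ 4 e^{-x} dx`; the tail contributes
`∫_μ^∞ x ^ 3 e^{-x} dx`. Both are incomplete gamma integrals of integer order, computed from the
antiderivative `-e^{-x} ∑_{k ≤ n} n! / k! x ^ k` of `x ^ n e^{-x}`.
-/

open MeasureTheory Real

open Set Filter Topology
open scoped Nat

/-- `exp (-x) * gammaTailPoly n x` is the upper incomplete gamma function `Γ(n + 1, x)`;
explicitly `gammaTailPoly n x = ∑_{k ≤ n} n! / k! * x ^ k`. -/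
noncomputable def gammaTailPoly : ℕ → ℝ → ℝ
  | 0, _ => 1
  | n + 1, x => x ^ (n + 1) + (n + 1) * gammaTailPoly n x

theorem gammaTailPoly_zero_right (n : ℕ) : gammaTailPoly n 0 = n ! := by
  induction n with
  | zero => simp [gammaTailPoly]
  | succ n ih => simp [gammaTailPoly, ih, Nat.factorial_succ]

theorem hasDerivAt_gammaTailPoly (n : ℕ) (x : ℝ) :
    HasDerivAt (gammaTailPoly n) (gammaTailPoly n x - x ^ n) x := by
  induction n with
  | zero => simpa [gammaTailPoly] using hasDerivAt_const x (1 : ℝ)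
  | succ n ih =>
    refine ((hasDerivAt_pow (n + 1) x).add (ih.const_mul ((n : ℝ) + 1))).congr_deriv ?_
    simp only [gammaTailPoly, Nat.add_sub_cancel]
    push_cast
    ring

theorem hasDerivAt_neg_exp_neg_mul_gammaTailPoly (n : ℕ) (x : ℝ) :
    HasDerivAt (fun y => -(exp (-y) * gammaTailPoly n y)) (x ^ n * exp (-x)) x :=
  ((hasDerivAt_neg x).exp.mul (hasDerivAt_gammaTailPoly n x)).neg.congr_deriv (by ring)

theorem tendsto_exp_neg_mul_gammaTailPoly_atTop (n : ℕ) :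
    Tendsto (fun x => exp (-x) * gammaTailPoly n x) atTop (𝓝 0) := by
  induction n with
  | zero => simpa [gammaTailPoly] using tendsto_exp_neg_atTop_nhds_zero
  | succ n ih =>
    have h := (tendsto_pow_mul_exp_neg_atTop_nhds_zero (n + 1)).add (ih.const_mul ((n : ℝ) + 1))
    rw [mul_zero, add_zero] at h
    refine h.congr fun x => ?_
    simp only [gammaTailPoly]
    ring

theorem integrableOn_pow_mul_exp_neg_Ioi (n : ℕ) {a : ℝ} (ha : 0 ≤ a) :
    IntegrableOn (fun x => x ^ n * exp (-x)) (Ioi a) :=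
  integrableOn_Ioi_deriv_of_nonneg' (fun x _ => hasDerivAt_neg_exp_neg_mul_gammaTailPoly n x)
    (fun x hx => mul_nonneg (pow_nonneg (ha.trans hx.out.le) n) (exp_pos _).le)
    (by simpa using (tendsto_exp_neg_mul_gammaTailPoly_atTop n).neg)

theorem integral_pow_mul_exp_neg_Ioi (n : ℕ) {a : ℝ} (ha : 0 ≤ a) :
    ∫ x in Ioi a, x ^ n * exp (-x) = exp (-a) * gammaTailPoly n a := by
  rw [integral_Ioi_of_hasDerivAt_of_nonneg'
    (fun x _ => hasDerivAt_neg_exp_neg_mul_gammaTailPoly n x)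
    (fun x hx => mul_nonneg (pow_nonneg (ha.trans hx.out.le) n) (exp_pos _).le)
    (by simpa using (tendsto_exp_neg_mul_gammaTailPoly_atTop n).neg)]
  ring

theorem integral_pow_mul_exp_neg_zero_left (n : ℕ) (a : ℝ) :
    ∫ x in (0 : ℝ)..a, x ^ n * exp (-x) = (n ! : ℝ) - exp (-a) * gammaTailPoly n a := by
  rw [intervalIntegral.integral_eq_sub_of_hasDerivAt
    (fun x _ => hasDerivAt_neg_exp_neg_mul_gammaTailPoly n x)
    ((by fun_prop : Continuous fun x : ℝ => x ^ n * exp (-x)).intervalIntegrable _ _),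
    gammaTailPoly_zero_right, neg_zero, exp_zero, one_mul]
  ring

theorem intervalIntegral.integral_neg_self_eq_integral_add_comp_neg {f : ℝ → ℝ} {a : ℝ}
    (hf : IntervalIntegrable f volume (-a) a) :
    ∫ x in -a..a, f x = ∫ x in (0 : ℝ)..a, (f x + f (-x)) := by
  have h0 : (0 : ℝ) ∈ uIcc (-a) a := by simp [mem_uIcc, le_total]
  have hleft := hf.mono_set (uIcc_subset_uIcc_left h0)
  have hright := hf.mono_set (uIcc_subset_uIcc_right h0)
  have hright_neg : IntervalIntegrable (fun x => f (-x)) volume 0 a := by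
    simpa using ((IntervalIntegrable.iff_comp_neg).mp hleft).symm
  rw [← intervalIntegral.integral_add_adjacent_intervals hleft hright,
    intervalIntegral.integral_add hright hright_neg, intervalIntegral.integral_comp_neg, neg_zero,
    add_comm]

section SSLUD

variable {μ x : ℝ}

theorem g_eq_zero_of_le_neg (hμ : 0 < μ) (hx : x ≤ -μ) : g μ x = 0 := by
  rcases hx.lt_or_eq with hlt | rfl
  · simp [g, hlt]
  · have hμ0 : μ ≠ 0 := hμ.ne'
    simp only [g, lt_irrefl, if_false, neg_lt_self_iff, hμ, if_true]
    field_simp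
    ring

theorem g_of_mem_Ioc_s6 (hx : x ∈ Ioc (-μ) μ) :
    g μ x = exp (-|x|) * (x / (2 * μ) + 1 / 2) := by
  obtain ⟨hleft, hright⟩ := hx
  rw [g, if_neg (not_lt.mpr hleft.le)]
  rcases hright.lt_or_eq with hlt | rfl
  · rw [if_pos hlt]
  · have hx : 0 < x := by linarith
    rw [if_neg (lt_irrefl x), abs_of_pos hx]
    field_simp
    ring

theorem g_of_lt (hμ : 0 ≤ μ) (hx : μ < x) : g μ x = exp (-x) := by
  rw [g, if_neg (by linarith), if_neg (not_lt.mpr hx.le)]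

theorem integrableOn_Ioc_cube_mul_g : IntegrableOn (fun x => x ^ 3 * g μ x) (Ioc (-μ) μ) := by
  have hcont : Continuous fun x : ℝ => x ^ 3 * (exp (-|x|) * (x / (2 * μ) + 1 / 2)) := by
    fun_prop
  exact hcont.integrableOn_Ioc.congr_fun (fun x hx => by rw [g_of_mem_Ioc_s6 hx]) measurableSet_Ioc

theorem integral_Ioc_cube_mul_g (hμ : 0 < μ) :
    ∫ x in Ioc (-μ) μ, x ^ 3 * g μ x = (24 - exp (-μ) * gammaTailPoly 4 μ) / μ := by
  have hcont : Continuous fun x : ℝ => x ^ 3 * (exp (-|x|) * (x / (2 * μ) + 1 / 2)) := by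
    fun_prop
  calc ∫ x in Ioc (-μ) μ, x ^ 3 * g μ x
      = ∫ x in -μ..μ, x ^ 3 * (exp (-|x|) * (x / (2 * μ) + 1 / 2)) := by
        rw [intervalIntegral.integral_of_le (neg_le_self hμ.le)]
        exact setIntegral_congr_fun measurableSet_Ioc fun x hx => by rw [g_of_mem_Ioc_s6 hx]
    _ = ∫ x in (0 : ℝ)..μ, x ^ 4 * exp (-x) / μ := by
        rw [intervalIntegral.integral_neg_self_eq_integral_add_comp_neg
          (hcont.intervalIntegrable _ _)]
        refine intervalIntegral.integral_congr fun x hx => ?_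
        rw [uIcc_of_le hμ.le] at hx
        simp only [abs_neg, abs_of_nonneg hx.1]
        field_simp
        ring
    _ = (24 - exp (-μ) * gammaTailPoly 4 μ) / μ := by
        rw [intervalIntegral.integral_div, integral_pow_mul_exp_neg_zero_left]
        norm_num [Nat.factorial]

theorem eqOn_cube_mul_g_Ioi (hμ : 0 ≤ μ) :
    EqOn (fun x => x ^ 3 * g μ x) (fun x => x ^ 3 * exp (-x)) (Ioi μ) :=
  fun x hx => by simp only [g_of_lt hμ hx]

theorem integrableOn_Ioi_cube_mul_g (hμ : 0 ≤ μ) :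
    IntegrableOn (fun x => x ^ 3 * g μ x) (Ioi μ) :=
  (integrableOn_pow_mul_exp_neg_Ioi 3 hμ).congr_fun (eqOn_cube_mul_g_Ioi hμ).symm measurableSet_Ioi

theorem integral_Ioi_cube_mul_g (hμ : 0 ≤ μ) :
    ∫ x in Ioi μ, x ^ 3 * g μ x = exp (-μ) * gammaTailPoly 3 μ := by
  rw [setIntegral_congr_fun measurableSet_Ioi (eqOn_cube_mul_g_Ioi hμ),
    integral_pow_mul_exp_neg_Ioi 3 hμ]

end SSLUD

theorem sslud_third_moment (μ : ℝ) (hμ : 0 < μ) :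
    (∫ x : ℝ, x ^ 3 * g μ x) = 24 / μ - Real.exp (-μ) * (μ ^ 2 + 6 * μ + 18 + 24 / μ) := by
  have hvanish : ∀ x ∉ Ioi (-μ), x ^ 3 * g μ x = 0 := fun x hx => by
    rw [g_eq_zero_of_le_neg hμ (not_lt.mp hx), mul_zero]
  rw [← setIntegral_eq_integral_of_forall_compl_eq_zero hvanish,
    ← Ioc_union_Ioi_eq_Ioi (neg_le_self hμ.le),
    setIntegral_union (Ioc_disjoint_Ioi le_rfl) measurableSet_Ioi integrableOn_Ioc_cube_mul_g
      (integrableOn_Ioi_cube_mul_g hμ.le),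
    integral_Ioc_cube_mul_g hμ, integral_Ioi_cube_mul_g hμ.le]
  simp only [gammaTailPoly]
  field_simp
  ring
end

section
/- For every μ with 0 < μ < 1/2, the density g of SSLUD(μ) attains its maximum at the point μ: for all real x, g(x) ≤ g(μ), where g(μ) = e^{-μ}. -/
/-!
On `[-μ, μ)` the linear factor `x / (2μ) + 1/2` lies below the tangent line `|x| - μ + 1` of
`exp (|x| - μ)` as soon as `μ ≤ 1/2`, so the density there is at most `exp (-μ)`; on `[μ, ∞)` the
density `exp (-x)` is decreasing.
-/

open MeasureTheory Real

lemma ramp_le_abs_sub_add_one {μ x : ℝ} (hμ : 0 < μ) (hμ' : μ ≤ 1 / 2) (hx : x ≤ μ) :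
    x / (2 * μ) + 1 / 2 ≤ |x| - μ + 1 := by
  have h : x / (2 * μ) + 1 / 2 = (x + μ) / (2 * μ) := by field_simp
  rw [h, div_le_iff₀ (by positivity)]
  rcases abs_cases x with ⟨hx', _⟩ | ⟨hx', _⟩ <;> rw [hx'] <;> nlinarith

lemma exp_neg_abs_mul_ramp_le {μ x : ℝ} (hμ : 0 < μ) (hμ' : μ ≤ 1 / 2) (hx : x ≤ μ) :
    exp (-|x|) * (x / (2 * μ) + 1 / 2) ≤ exp (-μ) :=
  calc exp (-|x|) * (x / (2 * μ) + 1 / 2)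
      ≤ exp (-|x|) * exp (|x| - μ) := by
        gcongr
        linarith [ramp_le_abs_sub_add_one hμ hμ' hx, add_one_le_exp (|x| - μ)]
    _ = exp (-μ) := by rw [← exp_add]; ring_nf

lemma g_self {μ : ℝ} (hμ : 0 ≤ μ) : g μ μ = exp (-μ) := by
  rw [g, if_neg (by linarith), if_neg (lt_irrefl μ)]

theorem sslud_mode_small (μ : ℝ) (hμ : 0 < μ) (hμ' : μ < 1 / 2) :
    (∀ x : ℝ, g μ x ≤ g μ μ) ∧ g μ μ = Real.exp (-μ) := by
  refine ⟨fun x => ?_, g_self hμ.le⟩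
  rw [g_self hμ.le, g]
  split_ifs with hleft hcentral
  · positivity
  · exact exp_neg_abs_mul_ramp_le hμ hμ'.le hcentral.le
  · exact exp_le_exp.2 (by linarith [not_lt.1 hcentral])
end

section
/- For every μ with 1/2 ≤ μ < 1, the density g of SSLUD(μ) attains its maximum at the point 1 - μ: for all real x, g(x) ≤ g(1 - μ). -/
open MeasureTheory Real

/-!
Everything reduces to `s ≤ exp (s - 1)`, i.e. `exp (-x) * (x + t) ≤ exp (t - 1)`. On `[-μ, μ)` the
density is `exp (-|x|) * (x + μ) / (2μ) ≤ exp (-|x|) * (|x| + μ) / (2μ)`, and on `[μ, ∞)` it is at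
most `exp (-μ) = exp (-μ) * (μ + μ) / (2μ)`; both are therefore bounded by `exp (μ - 1) / (2μ)`,
which is the value at `1 - μ` when `1/2 ≤ μ ≤ 1`.
-/

theorem Real.exp_neg_mul_add_le_exp_sub_one (x t : ℝ) : exp (-x) * (x + t) ≤ exp (t - 1) := by
  have h : x + t ≤ exp x * exp (t - 1) := by
    rw [← exp_add]
    linarith [add_one_le_exp (x + (t - 1))]
  rw [exp_neg, inv_mul_le_iff₀ (exp_pos x)]
  exact h

namespace SSLUD

variable {μ x : ℝ}

theorem g_of_lt_neg (hx : x < -μ) : g μ x = 0 := if_pos hx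

theorem g_of_mem_Ico (hμ : 0 < μ) (hx : x ∈ Set.Ico (-μ) μ) :
    g μ x = exp (-|x|) * (x + μ) / (2 * μ) := by
  rw [g, if_neg (not_lt.mpr hx.1), if_pos hx.2]
  field_simp

theorem g_of_le (hμ : 0 ≤ μ) (hx : μ ≤ x) : g μ x = exp (-x) := by
  rw [g, if_neg (by linarith), if_neg (not_lt.mpr hx)]

theorem g_le_exp_sub_one_div (hμ : 0 < μ) (x : ℝ) : g μ x ≤ exp (μ - 1) / (2 * μ) := by
  have hmax : 0 < exp (μ - 1) / (2 * μ) := by positivity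
  rcases lt_or_ge x (-μ) with hlt | hge
  · rw [g_of_lt_neg hlt]
    exact hmax.le
  rcases lt_or_ge x μ with hlt' | hge'
  · rw [g_of_mem_Ico hμ ⟨hge, hlt'⟩]
    gcongr
    calc exp (-|x|) * (x + μ) ≤ exp (-|x|) * (|x| + μ) := by gcongr; exact le_abs_self x
      _ ≤ exp (μ - 1) := exp_neg_mul_add_le_exp_sub_one _ _
  · calc g μ x = exp (-x) := g_of_le hμ.le hge'
      _ ≤ exp (-μ) := exp_le_exp.mpr (neg_le_neg hge')
      _ = exp (-μ) * (μ + μ) / (2 * μ) := by field_simp; ring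
      _ ≤ exp (μ - 1) / (2 * μ) := by gcongr; exact exp_neg_mul_add_le_exp_sub_one _ _

theorem g_one_sub (h1 : 1 / 2 ≤ μ) (h2 : μ ≤ 1) : g μ (1 - μ) = exp (μ - 1) / (2 * μ) := by
  have hμ : 0 < μ := by linarith
  rcases (show 1 - μ ≤ μ by linarith).lt_or_eq with hlt | heq
  · rw [g_of_mem_Ico hμ ⟨by linarith, hlt⟩, abs_of_nonneg (by linarith), neg_sub]
    ring
  · have hhalf : μ = 1 / 2 := by linarith
    rw [heq, g_of_le hμ.le le_rfl, hhalf]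
    norm_num

end SSLUD

theorem sslud_mode_mid (μ : ℝ) (h1 : 1 / 2 ≤ μ) (h2 : μ < 1) :
    ∀ x : ℝ, g μ x ≤ g μ (1 - μ) := by
  intro x
  rw [SSLUD.g_one_sub h1 h2.le]
  exact SSLUD.g_le_exp_sub_one_div (by linarith) x
end

section
/- For every μ with μ ≥ 1, the density g of SSLUD(μ) attains its maximum at the point 0: for all real x, g(x) ≤ g(0), where g(0) = 1/2. -/
open MeasureTheory Real

/-!
Every branch of `g μ` is at most `exp (-t) * (t + 1) / 2` for `t = |x|` (using `μ ≥ 1` to bound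
`x / (2μ)` by `|x| / 2`, and `x ≥ μ ≥ 1` on the right tail), and `exp (-t) * (t + 1) ≤ 1` is
`t + 1 ≤ exp t`.
-/

lemma exp_neg_mul_add_one_le_one (t : ℝ) : exp (-t) * (t + 1) ≤ 1 := by
  rw [exp_neg, inv_mul_le_iff₀ (exp_pos t), mul_one]
  exact add_one_le_exp t

lemma g_zero {μ : ℝ} (hμ : 0 < μ) : g μ 0 = 1 / 2 := by
  simp [g, hμ, (neg_neg_of_pos hμ).not_gt]

lemma g_le_half {μ : ℝ} (hμ : 1 ≤ μ) (x : ℝ) : g μ x ≤ 1 / 2 := by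
  unfold g
  split_ifs with h_left h_mid
  · norm_num
  · have h_slope : x / (2 * μ) ≤ |x| / 2 :=
      calc x / (2 * μ) ≤ |x| / (2 * μ) := by gcongr; exact le_abs_self x
        _ ≤ |x| / 2 := by gcongr; linarith
    calc exp (-|x|) * (x / (2 * μ) + 1 / 2)
        ≤ exp (-|x|) * (|x| + 1) / 2 := by
          rw [mul_div_assoc]; gcongr; linarith
      _ ≤ 1 / 2 := by gcongr; exact exp_neg_mul_add_one_le_one |x|
  · have hx : 1 ≤ x := hμ.trans (not_lt.mp h_mid)
    calc exp (-x) ≤ exp (-x) * (x + 1) / 2 := by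
          rw [mul_div_assoc]; exact le_mul_of_one_le_right (exp_nonneg _) (by linarith)
      _ ≤ 1 / 2 := by gcongr; exact exp_neg_mul_add_one_le_one x

theorem sslud_mode_large (μ : ℝ) (hμ : 1 ≤ μ) :
    (∀ x : ℝ, g μ x ≤ g μ 0) ∧ g μ 0 = 1 / 2 := by
  have hg0 : g μ 0 = 1 / 2 := g_zero (zero_lt_one.trans_le hμ)
  exact ⟨fun x => hg0 ▸ g_le_half hμ x, hg0⟩
end

section
/- For every μ > 0 and every real x with 0 ≤ x < μ, the hazard rate of SSLUD(μ) satisfies g(x)/(1 - G(x)) = [1 + (1 - e^{x-μ})/(x + μ)]^{-1}. -/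
open MeasureTheory Real

/-! On `[-μ, 0]` and `[0, μ)` the density is `e^{±t}` times an affine function, so `G` on
`[0, μ)` is computed from explicit antiderivatives of the two pieces, glued at `0`.
Both `g(x)` and `1 - G(x)` carry the factor `e^{-x} / (2μ)`, which cancels in the hazard rate. -/

open Set intervalIntegral

variable {μ : ℝ}

lemma g_eq_zero_of_le (hμ : 0 < μ) {t : ℝ} (ht : t ≤ -μ) : g μ t = 0 := by
  rcases ht.lt_or_eq with ht | rfl
  · simp [g, ht]
  · have : -μ / (2 * μ) + 1 / 2 = 0 := by field_simp; ring
    simp only [g, lt_irrefl, if_false, if_pos (neg_lt_self hμ), this, mul_zero]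

lemma g_eqOn_Icc_neg (hμ : 0 < μ) :
    EqOn (g μ) (fun t => exp t * (t / (2 * μ) + 1 / 2)) (Icc (-μ) 0) := by
  rintro t ⟨ht₁, ht₂⟩
  simp only [g, if_neg ht₁.not_gt, if_pos (ht₂.trans_lt hμ), abs_of_nonpos ht₂, neg_neg]

lemma g_eqOn_Ico_pos :
    EqOn (g μ) (fun t => exp (-t) * (t / (2 * μ) + 1 / 2)) (Ico 0 μ) := by
  rintro t ⟨ht₁, ht₂⟩
  have : ¬ t < -μ := by linarith
  simp only [g, if_neg this, if_pos ht₂, abs_of_nonneg ht₁]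

lemma G_eq_intervalIntegral (hμ : 0 < μ) {x : ℝ} (hx : -μ ≤ x) :
    G μ x = ∫ t in (-μ)..x, g μ t := by
  rw [integral_of_le hx, G, setIntegral_eq_of_subset_of_forall_sdiff_eq_zero measurableSet_Iic
    (fun t (ht : t ∈ Ioc (-μ) x) => ht.2)]
  rintro t ⟨htx, ht⟩
  exact g_eq_zero_of_le hμ (not_lt.1 fun h => ht ⟨h, htx⟩)

lemma integral_g_Icc_neg (hμ : 0 < μ) :
    ∫ t in (-μ)..0, g μ t = (1 - 1 / μ + exp (-μ) / μ) / 2 := by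
  have hderiv : ∀ t, HasDerivAt (fun t => exp t * (t / (2 * μ) + (1 / 2 - 1 / (2 * μ))))
      (exp t * (t / (2 * μ) + 1 / 2)) t := fun t =>
    ((hasDerivAt_exp t).mul (((hasDerivAt_id t).div_const _).add_const _)).congr_deriv
      (by simp only [id]; field_simp; ring)
  rw [integral_congr ((g_eqOn_Icc_neg hμ).mono (uIcc_of_le (by linarith)).subset),
    integral_eq_sub_of_hasDerivAt (fun t _ => hderiv t)
      (Continuous.intervalIntegrable (by fun_prop) _ _)]
  field_simp
  simp only [exp_zero]
  ring

lemma integral_g_Ico_pos {x : ℝ} (h₁ : 0 ≤ x) (h₂ : x < μ) :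
    ∫ t in 0..x, g μ t = (1 + 1 / μ - exp (-x) * ((x + 1) / μ + 1)) / 2 := by
  have hderiv : ∀ t, HasDerivAt (fun t => -(exp (-t) * (t / (2 * μ) + (1 / 2 + 1 / (2 * μ)))))
      (exp (-t) * (t / (2 * μ) + 1 / 2)) t := fun t =>
    ((hasDerivAt_neg t).exp.mul (((hasDerivAt_id t).div_const _).add_const _)).neg.congr_deriv
      (by simp only [id]; ring)
  have hsub : uIcc 0 x ⊆ Ico 0 μ := by
    rw [uIcc_of_le h₁]; exact Icc_subset_Ico_right h₂
  rw [integral_congr (g_eqOn_Ico_pos.mono hsub),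
    integral_eq_sub_of_hasDerivAt (fun t _ => hderiv t)
      (Continuous.intervalIntegrable (by fun_prop) _ _)]
  field_simp
  simp only [neg_zero, exp_zero]
  ring

lemma one_sub_G_of_mem_Ico {x : ℝ} (h₁ : 0 ≤ x) (h₂ : x < μ) :
    1 - G μ x = exp (-x) * (x + μ + 1 - exp (x - μ)) / (2 * μ) := by
  have hμ : 0 < μ := h₁.trans_lt h₂
  have hneg : IntervalIntegrable (g μ) volume (-μ) 0 :=
    (Continuous.intervalIntegrable (by fun_prop) _ _).congr ((g_eqOn_Icc_neg hμ).symm.mono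
        ((uIoc_of_le (by linarith)).trans_subset Ioc_subset_Icc_self))
  have hpos : IntervalIntegrable (g μ) volume 0 x :=
    (Continuous.intervalIntegrable (by fun_prop) _ _).congr (g_eqOn_Ico_pos.symm.mono
        ((uIoc_of_le h₁).trans_subset (Ioc_subset_Icc_self.trans (Icc_subset_Ico_right h₂))))
  have hexp : exp (-μ) = exp (-x) * exp (x - μ) := by rw [← exp_add]; ring_nf
  rw [G_eq_intervalIntegral hμ (by linarith), ← integral_add_adjacent_intervals hneg hpos,
    integral_g_Icc_neg hμ, integral_g_Ico_pos h₁ h₂, hexp]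
  field_simp
  ring

lemma g_of_mem_Ico {x : ℝ} (h₁ : 0 ≤ x) (h₂ : x < μ) :
    g μ x = exp (-x) * (x + μ) / (2 * μ) := by
  rw [g_eqOn_Ico_pos ⟨h₁, h₂⟩]
  field_simp [(h₁.trans_lt h₂).ne']

theorem sslud_hazard_mid_general (μ : ℝ) (x : ℝ) (h1 : 0 ≤ x) (h2 : x < μ) :
    g μ x / (1 - G μ x) = (1 + (1 - Real.exp (x - μ)) / (x + μ))⁻¹ := by
  have hμ : 0 < μ := h1.trans_lt h2
  have hxμ : 0 < x + μ := by linarith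
  have hsurv : 0 < x + μ + 1 - exp (x - μ) := by
    have : exp (x - μ) < 1 := exp_lt_one_iff.2 (by linarith)
    linarith
  have hrhs : 1 + (1 - exp (x - μ)) / (x + μ) = (x + μ + 1 - exp (x - μ)) / (x + μ) := by
    field_simp; ring
  rw [g_of_mem_Ico h1 h2, one_sub_G_of_mem_Ico h1 h2, hrhs, inv_div]
  field_simp

theorem sslud_hazard_mid (μ : ℝ) (hμ : 0 < μ) (x : ℝ) (h1 : 0 ≤ x) (h2 : x < μ) :
    g μ x / (1 - G μ x) = (1 + (1 - Real.exp (x - μ)) / (x + μ))⁻¹ :=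
  sslud_hazard_mid_general μ x h1 h2
end
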